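/- Let m be a natural number and define G_{2m}(x,y) = Π_{i=0}^{m−1} (x+y+m−1−2i)(x−y+m−1−2i) for real (or integer) x, y. Then for all integers j, f and all ε, δ ∈ {1, −1}: G_{2m}(j+ε, f+δ) · (ε·j + δ·f + 1 − m) = (ε·j + δ·f + m + 1) · G_{2m}(j, f). -/
import Mathlib


/-- `G_{2m}(x,y)` over the integers. -/
def productForm (m : ℕ) (x y : ℤ) : ℤ :=
  ∏ i ∈ Finset.range m,
    (x + y + (m : ℤ) - 1 - 2 * (i : ℤ)) * (x - y + (m : ℤ) - 1 - 2 * (i : ℤ))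

private def A (m : ℕ) (s : ℤ) : ℤ :=
  ∏ i ∈ Finset.range m, (s + (m : ℤ) - 1 - 2 * (i : ℤ))

private lemma productForm_eq (m : ℕ) (x y : ℤ) :
    productForm m x y = A m (x + y) * A m (x - y) := by
  unfold productForm A
  rw [Finset.prod_mul_distrib]

private lemma key (m : ℕ) (s : ℤ) :
    A m (s + 2) * (s + 1 - (m : ℤ)) = (s + (m : ℤ) + 1) * A m s := by
  cases m with
  | zero => simp [A]
  | succ k =>
    have h1 : A (k + 1) (s + 2)
        = (∏ i ∈ Finset.range k, (s + (k : ℤ) - 2 * (i : ℤ))) * (s + (k : ℤ) + 2) := by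
      unfold A
      rw [Finset.prod_range_succ']
      congr 1
      · exact Finset.prod_congr rfl (fun i _ => by push_cast; ring)
      · push_cast; ring
    have h2 : A (k + 1) s
        = (∏ i ∈ Finset.range k, (s + (k : ℤ) - 2 * (i : ℤ))) * (s - (k : ℤ)) := by
      unfold A
      rw [Finset.prod_range_succ]
      congr 1
      · exact Finset.prod_congr rfl (fun i _ => by push_cast; ring)
      · push_cast; ring
    rw [h1, h2]
    push_cast
    ring

theorem stmt15 (m : ℕ) (j f ε δ : ℤ)
    (hε : ε = 1 ∨ ε = -1) (hδ : δ = 1 ∨ δ = -1) :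
    productForm m (j + ε) (f + δ) * (ε * j + δ * f + 1 - (m : ℤ)) =
      (ε * j + δ * f + (m : ℤ) + 1) * productForm m j f := by
  rcases hε with rfl | rfl <;> rcases hδ with rfl | rfl <;>
    rw [productForm_eq, productForm_eq]
  · have h := key m (j + f)
    have e1 : j + 1 + (f + 1) = j + f + 2 := by ring
    have e2 : j + 1 - (f + 1) = j - f := by ring
    rw [e1, e2]
    linear_combination A m (j - f) * h
  · have h := key m (j - f)
    have e1 : j + 1 + (f + -1) = j + f := by ring
    have e2 : j + 1 - (f + -1) = j - f + 2 := by ring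
    rw [e1, e2]
    linear_combination A m (j + f) * h
  · have h := key m (j - f - 2)
    have e1 : j + -1 + (f + 1) = j + f := by ring
    have e2 : j + -1 - (f + 1) = j - f - 2 := by ring
    have e3 : j - f - 2 + 2 = j - f := by ring
    rw [e1, e2]
    rw [e3] at h
    linear_combination A m (j + f) * h
  · have h := key m (j + f - 2)
    have e1 : j + -1 + (f + -1) = j + f - 2 := by ring
    have e2 : j + -1 - (f + -1) = j - f := by ring
    have e3 : j + f - 2 + 2 = j + f := by ring
    rw [e1, e2]
    rw [e3] at h
    linear_combination A m (j - f) * h
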